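/- Let 1 → T → U →Ad→ I → 1 be a central extension of groups, I normal in a group A, and suppose the conjugation action of A on U fixes T pointwise. Then two homomorphisms α, β : G → A/I that are conjugate by an element of A/I have equal obstruction classes in H³(G, T); i.e., the obstruction Ob : Hom(G, A/I)/conjugacy → H³(G, T) is a well-defined conjugacy invariant. -/

import Mathlib

/-!
Lift the conjugating element to `s : A`. Conjugating a lifting pair `(a, u)` of `α` by `s` gives
a lifting pair `(s a s⁻¹, φ s ∘ u)` of `β` whose obstruction is `φ s` of the old one, hence equal
to it: obstructions take values in the kernel `T`, which `A` fixes. Any lifting pair `(b, w)` of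
`β` arises from this one in two moves. Replacing the lift by `g ↦ Ad (v g) * s a_g s⁻¹` and the
factor set by its twist conjugates the obstruction, which changes nothing as `T` is central; then
changing the factor set by a `T`-valued 2-cochain `c` multiplies the obstruction by `δc`.
-/

/-- `(a, u)` is a lifting pair for the outer action `α : G → A ⧸ I`, `I = Ad.range`. -/
def LiftPair {U A G : Type*} [Group U] [Group A] [Group G]
    (Ad : U →* A) (α : G → A ⧸ Ad.range) (a : G → A) (u : G → G → U) : Prop :=
  a 1 = 1 ∧ (∀ g : G, (QuotientGroup.mk (a g) : A ⧸ Ad.range) = α g) ∧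
    ∀ g h : G, a g * a h = Ad (u g h) * a (g * h)

/-- The obstruction `Ob(α)(g,h,k) = u(g,h) u(gh,k) (a_g(u(h,k)) u(g,hk))⁻¹`. -/
def obstr {U A G : Type*} [Group U] [Group A] [Group G]
    (φ : A →* MulAut U) (a : G → A) (u : G → G → U) : G → G → G → U :=
  fun g h k => u g h * u (g * h) k * (φ (a g) (u h k) * u g (h * k))⁻¹

/-- The 3-coboundary of `c : G × G → T` (trivial action), in multiplicative notation. -/
def cob3 {U G : Type*} [Group U] [Group G] (c : G → G → U) : G → G → G → U :=
  fun g h k => c h k * (c (g * h) k)⁻¹ * c g (h * k) * (c g h)⁻¹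


section

variable {U A G : Type*} [Group U] [Group A] [Group G]

def IsFactorSet (Ad : U →* A) (a : G → A) (u : G → G → U) : Prop :=
  ∀ g h : G, a g * a h = Ad (u g h) * a (g * h)

/-- The factor set obtained from `u` when the lift `a` is replaced by `g ↦ Ad (v g) * a g`. -/
def twistFactorSet (φ : A →* MulAut U) (a : G → A) (u : G → G → U) (v : G → U) : G → G → U :=
  fun g h => v g * φ (a g) (v h) * u g h * (v (g * h))⁻¹

theorem exists_eq_map_mul_of_mk_eq {Ad : U →* A} [Ad.range.Normal] {y z : A}
    (h : (y : A ⧸ Ad.range) = z) : ∃ v : U, y = Ad v * z := by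
  obtain ⟨v, hv⟩ := QuotientGroup.eq_iff_div_mem.mp h
  exact ⟨v, by rw [hv, div_mul_cancel]⟩

variable {Ad : U →* A} {φ : A →* MulAut U} {a : G → A} {u : G → G → U}

theorem IsFactorSet.map_apply (hu : IsFactorSet Ad a u) (g h : G) :
    Ad (u g h) = a g * a h * (a (g * h))⁻¹ := by
  rw [hu g h, mul_inv_cancel_right]

theorem IsFactorSet.map_eq_map {w : G → G → U} (hu : IsFactorSet Ad a u) (hw : IsFactorSet Ad a w)
    (g h : G) : Ad (u g h) = Ad (w g h) :=
  mul_right_cancel ((hu g h).symm.trans (hw g h))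

theorem IsFactorSet.conj (hcomp : ∀ (a : A) (v : U), Ad (φ a v) = a * Ad v * a⁻¹)
    (hu : IsFactorSet Ad a u) (s : A) :
    IsFactorSet Ad (fun g => s * a g * s⁻¹) (fun g h => φ s (u g h)) := by
  intro g h
  simp only [hcomp, hu.map_apply]
  group

theorem IsFactorSet.twist (hcomp : ∀ (a : A) (v : U), Ad (φ a v) = a * Ad v * a⁻¹)
    (hu : IsFactorSet Ad a u) (v : G → U) :
    IsFactorSet Ad (fun g => Ad (v g) * a g) (twistFactorSet φ a u v) := by
  intro g h
  simp only [twistFactorSet, map_mul, map_inv, hcomp, hu.map_apply]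
  group

theorem obstr_mem_ker (hcomp : ∀ (a : A) (v : U), Ad (φ a v) = a * Ad v * a⁻¹)
    (hu : IsFactorSet Ad a u) (g h k : G) : obstr φ a u g h k ∈ Ad.ker := by
  rw [MonoidHom.mem_ker]
  simp only [obstr, map_mul, map_inv, hcomp, hu.map_apply, mul_assoc g h k]
  group

theorem obstr_conj (s : A) (g h k : G) :
    obstr φ (fun g => s * a g * s⁻¹) (fun g h => φ s (u g h)) g h k = φ s (obstr φ a u g h k) := by
  have hconj : φ (s * a g * s⁻¹) (φ s (u h k)) = φ s (φ (a g) (u h k)) := by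
    rw [← MulAut.mul_apply, ← map_mul, inv_mul_cancel_right, map_mul, MulAut.mul_apply]
  simp only [obstr, hconj, map_mul (φ s), map_inv (φ s)]

theorem obstr_twistFactorSet (hcomp : ∀ (a : A) (v : U), Ad (φ a v) = a * Ad v * a⁻¹)
    (hcent : Ad.ker ≤ Subgroup.center U) (hAdconj : ∀ v w : U, φ (Ad v) w = v * w * v⁻¹)
    (hu : IsFactorSet Ad a u) (v : G → U) (g h k : G) :
    obstr φ (fun g => Ad (v g) * a g) (twistFactorSet φ a u v) g h k = obstr φ a u g h k := by
  have hφa : ∀ g h y, φ (a g) (φ (a h) y) = u g h * φ (a (g * h)) y * (u g h)⁻¹ := by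
    intro g h y
    rw [← MulAut.mul_apply, ← map_mul, hu g h, map_mul, MulAut.mul_apply, hAdconj]
  have hφb : ∀ y, φ (Ad (v g) * a g) y = v g * φ (a g) y * (v g)⁻¹ := by
    intro y
    rw [map_mul, MulAut.mul_apply, hAdconj]
  set E := obstr φ a u g h k
  set Q := v g * φ (a g) (v h) * u g h * φ (a (g * h)) (v k) * (u g h)⁻¹
  have hconj : obstr φ (fun g => Ad (v g) * a g) (twistFactorSet φ a u v) g h k
      = Q * E * Q⁻¹ := by
    simp only [obstr, twistFactorSet]
    rw [hφb]
    simp only [map_mul, map_inv, hφa, E, Q, obstr, mul_assoc g h k]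
    group
  rw [hconj, Subgroup.mem_center_iff.mp (hcent (obstr_mem_ker hcomp hu g h k)),
    mul_inv_cancel_right]

theorem obstr_eq_obstr_mul_cob3 (hfix : ∀ (a : A) (t : U), t ∈ Ad.ker → φ a t = t)
    (hcent : Ad.ker ≤ Subgroup.center U) {w : G → G → U}
    (hAd : ∀ g h, Ad (u g h) = Ad (w g h)) (g h k : G) :
    obstr φ a w g h k = obstr φ a u g h k * cob3 (fun g h => (w g h)⁻¹ * u g h) g h k := by
  set c : G → G → U := fun g h => (w g h)⁻¹ * u g h
  have hc : ∀ g h, c g h ∈ Ad.ker := fun g h => by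
    simp only [c, MonoidHom.mem_ker, map_mul, map_inv, hAd, inv_mul_cancel]
  have hw : ∀ g h, w g h = u g h * (c g h)⁻¹ := fun g h => by
    simp only [c, mul_inv_rev, inv_inv, mul_inv_cancel_left]
  have hc1 := Subgroup.inv_mem _ (hcent (hc g h))
  have hc2 := Subgroup.inv_mem _ (hcent (hc (g * h) k))
  have hc3 := hcent (hc h k)
  have hc4 := hcent (hc g (h * k))
  simp only [obstr, cob3, hw, map_mul, map_inv, hfix _ _ (hc h k), mul_inv_rev, inv_inv, mul_assoc]
  -- pull each central factor to the front, one at a time so that `simp` terminates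
  simp only [← (Set.mem_center_iff.mp hc1).left_comm, Subgroup.mem_center_iff.mp hc1]
  simp only [← (Set.mem_center_iff.mp hc2).left_comm]
  simp only [← (Set.mem_center_iff.mp hc3).left_comm]
  simp only [← (Set.mem_center_iff.mp hc4).left_comm, Subgroup.mem_center_iff.mp hc4]

end

/-- conjugate homomorphisms `α, β : G → A/I` have equal obstruction classes
in `H³(G, T)`: the obstruction is a conjugacy invariant. -/
theorem stmt4 {U A G : Type*} [Group U] [Group A] [Group G]
    (Ad : U →* A) (φ : A →* MulAut U)
    (hcomp : ∀ (a : A) (v : U), Ad (φ a v) = a * Ad v * a⁻¹)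
    (hfix : ∀ (a : A) (t : U), t ∈ Ad.ker → φ a t = t)
    (hcent : ∀ t ∈ Ad.ker, ∀ v : U, t * v = v * t)
    (hAdconj : ∀ v w : U, φ (Ad v) w = v * w * v⁻¹)
    [hnor : Ad.range.Normal]
    (α β : G →* A ⧸ Ad.range)
    (hconj : ∃ x : A ⧸ Ad.range, ∀ g : G, β g = x * α g * x⁻¹) :
    ∀ (a : G → A) (u : G → G → U), LiftPair Ad α a u →
      ∀ (b : G → A) (w : G → G → U), LiftPair Ad β b w →
        ∃ c : G → G → U, (∀ g h : G, c g h ∈ Ad.ker) ∧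
          ∀ g h k : G, obstr φ b w g h k = obstr φ a u g h k * cob3 c g h k := by
  rintro a u ⟨-, haα, hu : IsFactorSet Ad a u⟩ b w ⟨-, hbβ, hw : IsFactorSet Ad b w⟩
  obtain ⟨x, hx⟩ := hconj
  obtain ⟨s, rfl⟩ := QuotientGroup.mk_surjective x
  have hcenter : Ad.ker ≤ Subgroup.center U := fun t ht =>
    Subgroup.mem_center_iff.mpr fun v => (hcent t ht v).symm
  choose v hv using fun g => exists_eq_map_mul_of_mk_eq (Ad := Ad) (y := b g) (z := s * a g * s⁻¹)
    (by simp only [hbβ, hx, QuotientGroup.mk_mul, QuotientGroup.mk_inv, haα])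
  obtain rfl : b = fun g => Ad (v g) * (s * a g * s⁻¹) := funext hv
  have hu' := hu.conj hcomp s
  have htwist := hu'.twist hcomp v
  refine ⟨fun g h => (w g h)⁻¹ *
    twistFactorSet φ (fun g => s * a g * s⁻¹) (fun g h => φ s (u g h)) v g h, fun g h => ?_,
    fun g h k => ?_⟩
  · rw [MonoidHom.mem_ker, map_mul, map_inv, hw.map_eq_map htwist, inv_mul_cancel]
  · rw [obstr_eq_obstr_mul_cob3 hfix hcenter (htwist.map_eq_map hw),
      obstr_twistFactorSet hcomp hcenter hAdconj hu', obstr_conj,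
      hfix s _ (obstr_mem_ker hcomp hu g h k)]
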